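/- arXiv:2007.09396 — 3 statements merged into one kernel-verified Lean document; each statement's English description precedes it below -/
import Mathlib

section
/- Let b : ℝ → ℝ be bounded and satisfy |b(t) - b(s)| ≤ L |t-s| |log|t-s|| for all distinct t,s, and let ψ ∈ C_c^∞(ℝ) be nonnegative with supp ψ ⊂ [1,2] and ∫ψ = 1. Define b_ε(t) = (1/ε) ∫ b(τ) ψ((t-τ)/ε) dτ. Then b_ε is differentiable and for all 0 < ε < 1/4 and all t, |b_ε'(t)| ≤ L (∫₁² |s ψ'(s)| ds) · |log ε|. -/
open MeasureTheory Real Set Filter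
open scoped Convolution Topology

theorem stmt_3 (L : ℝ) (hL : 0 < L) (b ψ : ℝ → ℝ)
    (hbdd : ∃ B, ∀ t, |b t| ≤ B)
    (hLL : ∀ t s : ℝ, t ≠ s →
      |b t - b s| ≤ L * |t - s| * |Real.log (|t - s|)|)
    (hψ : ContDiff ℝ (⊤ : ℕ∞) ψ) (hψc : HasCompactSupport ψ)
    (hψpos : ∀ s, 0 ≤ ψ s)
    (hsupp : tsupport ψ ⊆ Set.Icc (1:ℝ) 2)
    (hψint : ∫ s, ψ s = 1) :
    ∀ ε : ℝ, 0 < ε → ε < 1/4 → ∀ t : ℝ,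
      ∃ d : ℝ,
        HasDerivAt (fun x => (1/ε) * ∫ τ, b τ * ψ ((x - τ)/ε)) d t ∧
        |d| ≤ L * (∫ s in (1:ℝ)..2, |s * deriv ψ s|) * |Real.log ε| := by
  -- b is continuous
  have hbc : Continuous b := by
    rw [continuous_iff_continuousAt]
    intro s
    rw [ContinuousAt, tendsto_iff_norm_sub_tendsto_zero]
    have hg : Tendsto (fun t : ℝ => L * |(|t - s|) * Real.log (|t - s|)|) (𝓝 s) (𝓝 0) := by
      have hc : Continuous (fun t : ℝ => L * |(|t - s|) * Real.log (|t - s|)|) :=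
        continuous_const.mul ((Real.continuous_mul_log.comp (continuous_id.sub continuous_const).abs).abs)
      have := hc.tendsto s
      simpa using this
    refine squeeze_zero (fun t => norm_nonneg _) (fun t => ?_) hg
    rcases eq_or_ne t s with rfl | hts
    · simp
    · have := hLL t s hts
      rw [Real.norm_eq_abs]
      calc |b t - b s| ≤ L * |t - s| * |Real.log (|t - s|)| := this
        _ = L * |(|t - s|) * Real.log (|t - s|)| := by
            rw [abs_mul, abs_abs]; ring
  intro ε hε hε4 t
  have hεne : ε ≠ 0 := hε.ne'
  set ψd : ℝ → ℝ := deriv ψ with hψd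
  have hψdc : Continuous ψd := hψ.continuous_deriv (by simp)
  have hψdcs : HasCompactSupport ψd := hψc.deriv
  have hψdsupp : tsupport ψd ⊆ Set.Icc (1:ℝ) 2 :=
    (closure_minimal (support_deriv_subset.trans subset_closure)
      (isClosed_closure)).trans (by simpa using closure_minimal hsupp isClosed_Icc)
  have hψd0 : ∀ s, s ∉ Set.Icc (1:ℝ) 2 → ψd s = 0 := fun s hs =>
    image_eq_zero_of_notMem_tsupport (fun h => hs (hψdsupp h))
  -- the mollifier at scale ε
  set φ : ℝ → ℝ := fun u => ψ (u / ε) with hφdef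
  have hφ1 : ContDiff ℝ 1 φ := hψ.of_le (by simp) |>.comp (contDiff_id.div_const ε) |>.of_le le_rfl
  have hφcs : HasCompactSupport φ := by
    apply HasCompactSupport.intro (isCompact_Icc (a := ε) (b := 2*ε))
    intro u hu
    have h0 : ∀ v, v ∉ Set.Icc (1:ℝ) 2 → ψ v = 0 := fun v hv =>
      image_eq_zero_of_notMem_tsupport (fun hh => hv (hsupp hh))
    apply h0
    intro hmem
    simp only [Set.mem_Icc] at hmem hu
    rcases hmem with ⟨h1, h2⟩
    rw [le_div_iff₀ hε] at h1
    rw [div_le_iff₀ hε] at h2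
    exact hu ⟨by linarith, by linarith⟩
  -- derivative of φ
  have hφderiv : deriv φ = fun u => ψd (u / ε) * (1 / ε) := by
    funext u
    have h1 : HasDerivAt (fun v : ℝ => v / ε) (1 / ε) u := (hasDerivAt_id u).div_const ε
    have h2 : HasDerivAt ψ (ψd (u / ε)) (u / ε) :=
      ((hψ.differentiable (by simp)) (u / ε)).hasDerivAt
    exact (h2.comp u h1).deriv
  have hbl : LocallyIntegrable b volume := hbc.locallyIntegrable
  -- derivative via convolution
  have key := HasCompactSupport.hasDerivAt_convolution_right
    (ContinuousLinearMap.mul ℝ ℝ) hbl hφcs hφ1 t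
  -- the translated-dilated derivative of the mollifier
  set g : ℝ → ℝ := fun τ => ψd ((t - τ) / ε) with hg
  have hgc : Continuous g := hψdc.comp ((continuous_const.sub continuous_id).div_const ε)
  have hgcs : HasCompactSupport g := by
    apply HasCompactSupport.intro (isCompact_Icc (a := t - 2*ε) (b := t - ε))
    intro τ hτ
    apply hψd0
    intro hmem
    simp only [Set.mem_Icc] at hmem hτ
    rcases hmem with ⟨h1, h2⟩
    rw [le_div_iff₀ hε] at h1
    rw [div_le_iff₀ hε] at h2
    exact hτ ⟨by linarith, by linarith⟩
  have hintg : Integrable g := hgc.integrable_of_hasCompactSupport hgcs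
  have hint1 : Integrable (fun τ => (b τ - b t) * g τ) :=
    ((hbc.sub continuous_const).mul hgc).integrable_of_hasCompactSupport
      (HasCompactSupport.mul_left hgcs)
  -- the integral of g vanishes
  have hg0 : ∫ τ, g τ = 0 := by
    have h1 : ∫ τ, (fun u => ψd (u / ε)) (t - τ) = ∫ u, ψd (u / ε) :=
      integral_sub_left_eq_self (fun u => ψd (u / ε)) volume t
    have h2 : ∫ u, ψd (u / ε) = |ε| • ∫ s, ψd s :=
      Measure.integral_comp_div (fun s => ψd s) ε
    have hψ0 : ψ 0 = 0 := by
      apply image_eq_zero_of_notMem_tsupport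
      intro h
      have := hsupp h
      simp only [Set.mem_Icc] at this
      linarith [this.1]
    have h4 : ∫ s in Set.Ioi (0:ℝ), ψd s = -ψ 0 :=
      HasCompactSupport.integral_Ioi_deriv_eq (hψ.of_le (by simp)) hψc 0
    have h5 : ∫ s in Set.Ioi (0:ℝ), ψd s = ∫ s, ψd s := by
      apply setIntegral_eq_integral_of_forall_compl_eq_zero
      intro s hs
      apply hψd0
      intro hmem
      simp only [Set.mem_Icc] at hmem
      exact hs (by simp only [Set.mem_Ioi]; linarith [hmem.1])
    have h3 : ∫ s, ψd s = 0 := by rw [← h5, h4, hψ0, neg_zero]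
    calc ∫ τ, g τ = ∫ u, ψd (u / ε) := h1
      _ = |ε| • ∫ s, ψd s := h2
      _ = 0 := by rw [h3, smul_zero]
  -- identify the derivative
  set J : ℝ := ∫ τ, (b τ - b t) * g τ with hJ
  have hbg : ∫ τ, b τ * g τ = J := by
    have : ∀ τ, b τ * g τ = (b τ - b t) * g τ + b t * g τ := fun τ => by ring
    rw [show (fun τ => b τ * g τ) = fun τ => (b τ - b t) * g τ + b t * g τ from funext this]
    rw [integral_add hint1 (hintg.const_mul (b t)), integral_const_mul, hg0, mul_zero, add_zero]
  have hd0 : (b ⋆[ContinuousLinearMap.mul ℝ ℝ, volume] deriv φ) t = J * (1/ε) := by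
    have : (b ⋆[ContinuousLinearMap.mul ℝ ℝ, volume] deriv φ) t
        = ∫ τ, b τ * (ψd ((t - τ) / ε) * (1/ε)) := by
      simp only [convolution_def, ContinuousLinearMap.mul_apply', hφderiv]
    rw [this]
    calc ∫ τ, b τ * (ψd ((t - τ) / ε) * (1/ε)) = ∫ τ, (b τ * g τ) * (1/ε) := by
          congr 1; funext τ; rw [hg]; ring
      _ = (∫ τ, b τ * g τ) * (1/ε) := by rw [integral_mul_const]
      _ = J * (1/ε) := by rw [hbg]
  refine ⟨(1/ε) * (J * (1/ε)), ?_, ?_⟩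
  · have hfun : (b ⋆[ContinuousLinearMap.mul ℝ ℝ, volume] φ) = fun x => ∫ τ, b τ * ψ ((x - τ)/ε) := by
      funext x
      simp only [convolution_def, ContinuousLinearMap.mul_apply']
      rfl
    have := key.const_mul (1/ε)
    rw [hd0] at this
    simpa [hfun] using this
  · -- the quantitative bound
    set H : ℝ → ℝ := fun u => L * |(|u|) * Real.log (|u|)| * |ψd (u / ε)| with hH
    set G : ℝ → ℝ := fun s => L * |(|ε * s|) * Real.log (|ε * s|)| * |ψd s| with hG
    set R : ℝ → ℝ := fun s => L * (ε * |Real.log ε|) * |s * ψd s| with hR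
    have hHc : Continuous H :=
      (continuous_const.mul
        ((Real.continuous_mul_log.comp continuous_abs).abs)).mul
        ((hψdc.comp (continuous_id.div_const ε)).abs)
    have habs_g : HasCompactSupport (fun τ : ℝ => |g τ|) := by
      have : (fun τ : ℝ => |g τ|) = (fun x : ℝ => |x|) ∘ g := rfl
      rw [this]
      exact hgcs.comp_left (abs_zero)
    have hhint : Integrable (fun τ => H (t - τ)) := by
      apply Continuous.integrable_of_hasCompactSupport
      · exact hHc.comp (continuous_const.sub continuous_id)
      · have : (fun τ : ℝ => H (t - τ))
            = (fun τ => L * |(|t - τ|) * Real.log (|t - τ|)|) * (fun τ => |g τ|) := rfl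
        rw [this]
        exact HasCompactSupport.mul_left habs_g
    -- pointwise bound for the integrand of J
    have hJb : |J| ≤ ∫ τ, H (t - τ) := by
      rw [hJ, ← Real.norm_eq_abs]
      refine norm_integral_le_of_norm_le hhint (Filter.Eventually.of_forall fun τ => ?_)
      rw [Real.norm_eq_abs, abs_mul]
      by_cases hne : τ = t
      · rw [hne]
        have h0 : |b t - b t| * |g t| = 0 := by simp
        rw [h0]
        simp only [hH]
        positivity
      · have h1 := hLL τ t hne
        have : L * |τ - t| * |Real.log (|τ - t|)| = L * |(|t - τ|) * Real.log (|t - τ|)| := by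
          rw [abs_sub_comm τ t, abs_mul, abs_abs]; ring
        rw [this] at h1
        exact mul_le_mul_of_nonneg_right h1 (abs_nonneg _)
    -- change of variables
    have hHG : ∫ u, H u = |ε| • ∫ s, G s := by
      have h1 : ∀ u, H u = G (u / ε) := by
        intro u
        simp only [hH, hG, mul_div_cancel₀ u hεne]
      calc ∫ u, H u = ∫ u, G (u / ε) := by simp only [h1]
        _ = |ε| • ∫ s, G s := Measure.integral_comp_div G ε
    have hsub : ∫ τ, H (t - τ) = ∫ u, H u := integral_sub_left_eq_self H volume t
    -- compare G with R
    have hGc : Continuous G :=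
      (continuous_const.mul
        ((Real.continuous_mul_log.comp (continuous_const.mul continuous_id).abs).abs)).mul
        hψdc.abs
    have habs_ψd : HasCompactSupport (fun s : ℝ => |ψd s|) := by
      have : (fun s : ℝ => |ψd s|) = (fun x : ℝ => |x|) ∘ ψd := rfl
      rw [this]; exact hψdcs.comp_left (abs_zero)
    have hGint : Integrable G := by
      apply hGc.integrable_of_hasCompactSupport
      have : G = (fun s => L * |(|ε * s|) * Real.log (|ε * s|)|) * (fun s : ℝ => |ψd s|) := rfl
      rw [this]
      exact HasCompactSupport.mul_left habs_ψd
    have habs_sψd : HasCompactSupport (fun s : ℝ => |s * ψd s|) := by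
      have : (fun s : ℝ => |s * ψd s|) = (fun x : ℝ => |x|) ∘ ((fun s : ℝ => s) * ψd) := rfl
      rw [this]
      exact (HasCompactSupport.mul_left hψdcs).comp_left (abs_zero)
    have hRint : Integrable R := by
      apply Continuous.integrable_of_hasCompactSupport
      · exact continuous_const.mul (continuous_id.mul hψdc).abs
      · have : R = (fun _ : ℝ => L * (ε * |Real.log ε|)) * (fun s : ℝ => |s * ψd s|) := rfl
        rw [this]
        exact HasCompactSupport.mul_left habs_sψd
    have hGR : ∫ s, G s ≤ ∫ s, R s := by
      apply integral_mono hGint hRint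
      intro s
      by_cases hs : ψd s = 0
      · simp [hG, hR, hs]
      · have hmem : s ∈ Set.Icc (1:ℝ) 2 := by
          by_contra h
          exact hs (hψd0 s h)
        simp only [Set.mem_Icc] at hmem
        obtain ⟨hs1, hs2⟩ := hmem
        have hεs : 0 < ε * s := by positivity
        have hεs1 : ε * s ≤ 1 := by nlinarith
        have hlogε : Real.log ε < 0 := Real.log_neg hε (by linarith)
        have hlogs : 0 ≤ Real.log s := Real.log_nonneg hs1
        have hlog : Real.log (ε * s) = Real.log ε + Real.log s :=
          Real.log_mul hεne (by positivity)
        have hlogεs : Real.log (ε * s) ≤ 0 := Real.log_nonpos hεs.le hεs1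
        have hkey : |Real.log (ε * s)| ≤ |Real.log ε| := by
          rw [abs_of_nonpos hlogεs, abs_of_nonpos hlogε.le, hlog]
          linarith
        have h2 : |(|ε * s|) * Real.log (|ε * s|)| ≤ (ε * |Real.log ε|) * |s| := by
          rw [abs_of_pos hεs, abs_mul, abs_of_pos hεs, abs_of_nonneg (by linarith : (0:ℝ) ≤ s)]
          calc ε * s * |Real.log (ε * s)| ≤ ε * s * |Real.log ε| := by
                exact mul_le_mul_of_nonneg_left hkey (by positivity)
            _ = ε * |Real.log ε| * s := by ring
        simp only [hG, hR]
        calc L * |(|ε * s|) * Real.log (|ε * s|)| * |ψd s|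
            ≤ L * ((ε * |Real.log ε|) * |s|) * |ψd s| := by
              apply mul_le_mul_of_nonneg_right _ (abs_nonneg _)
              exact mul_le_mul_of_nonneg_left h2 hL.le
          _ = L * (ε * |Real.log ε|) * |s * ψd s| := by rw [abs_mul]; ring
    -- the integral of R
    have hIR : ∫ s, |s * ψd s| = ∫ s in (1:ℝ)..2, |s * ψd s| := by
      rw [intervalIntegral.integral_of_le (by norm_num : (1:ℝ) ≤ 2)]
      rw [← integral_Icc_eq_integral_Ioc]
      symm
      apply setIntegral_eq_integral_of_forall_compl_eq_zero
      intro x hx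
      rw [hψd0 x hx, mul_zero, abs_zero]
    have hRval : ∫ s, R s = L * (ε * |Real.log ε|) * ∫ s in (1:ℝ)..2, |s * ψd s| := by
      rw [hR]
      rw [MeasureTheory.integral_const_mul, hIR]
    -- assemble
    set I : ℝ := ∫ s in (1:ℝ)..2, |s * ψd s| with hIdef
    have hJfinal : |J| ≤ ε ^ 2 * (L * |Real.log ε| * I) := by
      have h1 : |J| ≤ |ε| • ∫ s, G s := by
        calc |J| ≤ ∫ τ, H (t - τ) := hJb
          _ = ∫ u, H u := hsub
          _ = |ε| • ∫ s, G s := hHG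
      have h2 : |ε| • ∫ s, G s ≤ |ε| • ∫ s, R s := by
        simp only [smul_eq_mul]
        exact mul_le_mul_of_nonneg_left hGR (abs_nonneg ε)
      calc |J| ≤ |ε| • ∫ s, R s := h1.trans h2
        _ = ε * (L * (ε * |Real.log ε|) * I) := by
            rw [smul_eq_mul, hRval, abs_of_pos hε]
        _ = ε ^ 2 * (L * |Real.log ε| * I) := by ring
    have h1ε : |(1:ℝ)/ε| = 1/ε := abs_of_pos (by positivity)
    have hd : |1/ε * (J * (1/ε))| = |J| * (1/ε^2) := by
      rw [abs_mul, abs_mul, h1ε]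
      ring
    rw [hd]
    calc |J| * (1/ε^2) ≤ (ε ^ 2 * (L * |Real.log ε| * I)) * (1/ε^2) := by
          apply mul_le_mul_of_nonneg_right hJfinal (by positivity)
      _ = L * I * |Real.log ε| := by
          have hne2 : (ε:ℝ)^2 ≠ 0 := by positivity
          rw [one_div, mul_comm (ε^2), mul_assoc, mul_inv_cancel₀ hne2, mul_one]
          ring
end

section
/- Let a : ℝ → ℝ be Log-Lipschitz with constant C and a(t) ≥ a₀² > 0, and let ψ be a nonnegative smooth bump supported in [1,2] with ∫ψ = 1. Set λ₂(t) = (√a * ψ_ε)(t) (mollification at scale ε) and λ₁ = -λ₂. Then |λ₂(t)² - a(t)| ≤ (C/a₀) ‖√a‖_∞ (∫₁² s ψ(s) ds) · ε |log ε| for all 0 < ε < 1/4 and all t. -/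
open MeasureTheory Real

lemma aux_cont (C : ℝ) (a : ℝ → ℝ)
    (hLL : ∀ t s : ℝ, t ≠ s → |a t - a s| ≤ C * |t - s| * |Real.log (|t - s|)|) :
    Continuous a := by
  rw [continuous_iff_continuousAt]
  intro t
  rw [ContinuousAt, tendsto_iff_dist_tendsto_zero]
  have hg : Continuous (fun s : ℝ => |C| * |(|s - t|) * Real.log (|s - t|)|) := by
    apply continuous_const.mul
    exact (Real.continuous_mul_log.comp ((continuous_id.sub continuous_const).abs)).abs
  have hg0 : Filter.Tendsto (fun s : ℝ => |C| * |(|s - t|) * Real.log (|s - t|)|)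
      (nhds t) (nhds 0) := by
    have := hg.tendsto t
    simpa using this
  apply squeeze_zero (fun s => dist_nonneg) _ hg0
  intro s
  rcases eq_or_ne s t with rfl | hst
  · simp [dist_self]
  · rw [Real.dist_eq]
    calc |a s - a t| ≤ C * |s - t| * |Real.log (|s - t|)| := hLL s t hst
      _ ≤ |C| * |(|s - t|) * Real.log (|s - t|)| := by
          rw [abs_mul, abs_abs, ← mul_assoc]
          gcongr
          exact le_abs_self C

theorem stmt_4 (C a₀ A : ℝ) (hC : 0 < C) (ha₀ : 0 < a₀) (a ψ : ℝ → ℝ)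
    (hlb : ∀ t, a₀ ^ 2 ≤ a t)
    (hLL : ∀ t s : ℝ, t ≠ s →
      |a t - a s| ≤ C * |t - s| * |Real.log (|t - s|)|)
    (hA : ∀ t, Real.sqrt (a t) ≤ A)
    (hψ : ContDiff ℝ (⊤ : ℕ∞) ψ) (hψc : HasCompactSupport ψ)
    (hψpos : ∀ s, 0 ≤ ψ s)
    (hsupp : tsupport ψ ⊆ Set.Icc (1:ℝ) 2)
    (hψint : ∫ s, ψ s = 1) :
    ∀ ε : ℝ, 0 < ε → ε < 1/4 → ∀ t : ℝ,
      |(∫ s, Real.sqrt (a (t - ε * s)) * ψ s) ^ 2 - a t| ≤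
        (C / a₀) * A * (∫ s in (1:ℝ)..2, s * ψ s) * ε * |Real.log ε| := by
  intro ε hε hε4 t
  have hcont : Continuous a := aux_cont C a hLL
  have ha_nonneg : ∀ u, 0 ≤ a u := fun u => le_trans (by positivity) (hlb u)
  have hsq : ∀ u, a₀ ≤ Real.sqrt (a u) := by
    intro u
    rw [show a₀ = Real.sqrt (a₀ ^ 2) by rw [Real.sqrt_sq ha₀.le]]
    exact Real.sqrt_le_sqrt (hlb u)
  have hA0 : 0 < A := lt_of_lt_of_le ha₀ (le_trans (hsq 0) (hA 0))
  set f : ℝ → ℝ := fun s => Real.sqrt (a (t - ε * s)) with hf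
  have hfcont : Continuous f :=
    Real.continuous_sqrt.comp (hcont.comp (by continuity))
  have hψcont : Continuous ψ := hψ.continuous
  have hIntψ : Integrable ψ := hψcont.integrable_of_hasCompactSupport hψc
  have hIntfψ : Integrable (fun s => f s * ψ s) :=
    (hfcont.mul hψcont).integrable_of_hasCompactSupport (hψc.mul_left)
  set c : ℝ := Real.sqrt (a t) with hc
  set I : ℝ := ∫ s, f s * ψ s with hI
  set K : ℝ := C * ε * |Real.log ε| / (2 * a₀) with hK
  have hK0 : 0 ≤ K := by positivity
  -- pointwise estimate on the support
  have hpt : ∀ s ∈ Set.Icc (1:ℝ) 2, |f s - c| ≤ K * s := by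
    intro s hs
    obtain ⟨hs1, hs2⟩ := hs
    have hs0 : 0 < s := lt_of_lt_of_le one_pos hs1
    have hεs : 0 < ε * s := by positivity
    have hεs1 : ε * s < 1 := by nlinarith
    have hne : t - ε * s ≠ t := by
      intro h
      have : ε * s = 0 := by linarith [sub_eq_iff_eq_add.mp h]
      linarith
    have hda : |a (t - ε * s) - a t| ≤ C * (ε * s) * |Real.log ε| := by
      have h1 := hLL (t - ε * s) t hne
      have habs : |t - ε * s - t| = ε * s := by
        rw [show t - ε * s - t = -(ε * s) by ring, abs_neg, abs_of_pos hεs]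
      rw [habs] at h1
      refine h1.trans ?_
      have hlog : |Real.log (ε * s)| ≤ |Real.log ε| := by
        rw [abs_of_nonpos (Real.log_nonpos hεs.le hεs1.le),
          abs_of_nonpos (Real.log_nonpos hε.le (by linarith))]
        have : Real.log (ε * s) = Real.log ε + Real.log s :=
          Real.log_mul hε.ne' hs0.ne'
        have hlogs : 0 ≤ Real.log s := Real.log_nonneg hs1
        linarith
      gcongr
    -- sqrt estimate
    have hx := ha_nonneg (t - ε * s)
    have hy := ha_nonneg t
    have hsum : 2 * a₀ ≤ f s + c := by
      have := hsq (t - ε * s); have := hsq t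
      simp only [hf, hc]; linarith
    have hsum0 : 0 < f s + c := lt_of_lt_of_le (by positivity) hsum
    have key : |f s - c| * (f s + c) = |a (t - ε * s) - a t| := by
      rw [← abs_of_pos hsum0, ← abs_mul]
      congr 1
      have : (f s - c) * (f s + c) = f s ^ 2 - c ^ 2 := by ring
      rw [this, hf, hc, Real.sq_sqrt hx, Real.sq_sqrt hy]
    have h2 : |f s - c| * (2 * a₀) ≤ C * (ε * s) * |Real.log ε| := by
      calc |f s - c| * (2 * a₀) ≤ |f s - c| * (f s + c) := by gcongr
        _ = |a (t - ε * s) - a t| := key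
        _ ≤ C * (ε * s) * |Real.log ε| := hda
    rw [hK]
    rw [div_mul_eq_mul_div, le_div_iff₀ (by positivity)]
    calc |f s - c| * (2 * a₀) ≤ C * (ε * s) * |Real.log ε| := h2
      _ = C * ε * |Real.log ε| * s := by ring
  -- the difference I - c
  have hIc : I - c = ∫ s, (f s - c) * ψ s := by
    rw [hI]
    have : ∀ s, (f s - c) * ψ s = f s * ψ s - c * ψ s := fun s => by ring
    simp_rw [this]
    rw [integral_sub hIntfψ (hIntψ.const_mul c), integral_const_mul, hψint, mul_one]
  -- bound on |I - c|
  have hbound_int : Integrable (fun s => K * (s * ψ s)) :=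
    (((continuous_const.mul (continuous_id.mul hψcont))).integrable_of_hasCompactSupport
      (by exact (hψc.mul_left).mul_left))
  have hIcle : |I - c| ≤ ∫ s, K * (s * ψ s) := by
    rw [hIc, ← Real.norm_eq_abs]
    refine (norm_integral_le_of_norm_le hbound_int ?_)
    filter_upwards with s
    rcases eq_or_ne (ψ s) 0 with h0 | h0
    · simp [h0]
    · have hs_mem : s ∈ Set.Icc (1:ℝ) 2 :=
        hsupp (subset_tsupport ψ (by simpa [Function.mem_support] using h0))
      have hs1 := hs_mem.1
      rw [Real.norm_eq_abs, abs_mul, abs_of_nonneg (hψpos s), ← mul_assoc]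
      gcongr
      · exact hψpos s
      · exact hpt s hs_mem
  -- identify the integral with the interval integral
  have hJ : (∫ s, s * ψ s) = ∫ s in (1:ℝ)..2, s * ψ s := by
    rw [intervalIntegral.integral_of_le (by norm_num : (1:ℝ) ≤ 2),
      ← MeasureTheory.integral_Icc_eq_integral_Ioc,
      setIntegral_eq_integral_of_forall_compl_eq_zero]
    intro x hx
    have : ψ x = 0 := by
      by_contra h
      exact hx (hsupp (subset_tsupport ψ (by simpa [Function.mem_support] using h)))
    simp [this]
  set J : ℝ := ∫ s in (1:ℝ)..2, s * ψ s with hJdef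
  have hIcle' : |I - c| ≤ K * J := by
    calc |I - c| ≤ ∫ s, K * (s * ψ s) := hIcle
      _ = K * ∫ s, s * ψ s := integral_const_mul K _
      _ = K * J := by rw [hJ]
  have hKJ0 : 0 ≤ K * J := le_trans (abs_nonneg _) hIcle'
  -- bounds on I
  have hI0 : 0 ≤ I := by
    apply integral_nonneg
    intro s
    exact mul_nonneg (Real.sqrt_nonneg _) (hψpos s)
  have hIA : I ≤ A := by
    have : I ≤ ∫ s, A * ψ s := by
      apply integral_mono hIntfψ (hIntψ.const_mul A)
      intro s
      exact mul_le_mul_of_nonneg_right (hA _) (hψpos s)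
    rwa [integral_const_mul, hψint, mul_one] at this
  have hc0 : 0 ≤ c := Real.sqrt_nonneg _
  have hcA : c ≤ A := hA t
  -- conclude
  have hat : a t = c ^ 2 := (Real.sq_sqrt (ha_nonneg t)).symm
  calc |I ^ 2 - a t| = |I - c| * (I + c) := by
        rw [hat, show I ^ 2 - c ^ 2 = (I - c) * (I + c) by ring, abs_mul,
          abs_of_nonneg (show (0:ℝ) ≤ I + c by linarith)]
    _ ≤ (K * J) * (2 * A) := by
        apply mul_le_mul hIcle' (by linarith) (by linarith) hKJ0
    _ = (C / a₀) * A * J * ε * |Real.log ε| := by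
        rw [hK]; field_simp
end

section
/- Let a : [0,T] → ℝ be continuous with a(t) ≥ a₀ > 0, and let β ≥ 1. Then every solution v ∈ C²([0,T], ℂ) of v''(t) + a(t) β² v(t) = 0 with initial data v(0) = v₀, v'(0) = v₁ satisfies, for some constants M, δ > 0 depending only on a, T (not on β, v₀, v₁): β² |v(t)|² + |v'(t)|² ≤ M² β^{δT} (β² |v₀|² + |v₁|²) for all t ∈ [0,T], provided a is Log-Lipschitz. -/
/-!
Following Colombini, De Giorgi and Spagnolo, replace `a` in the energy by its mean `a_ε` over
`[t, t + ε]` and consider the approximate energy `E = a_ε β² ‖v‖² + ‖v'‖²`. Its derivative is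
`a_ε' β² ‖v‖² + 2 β² (a_ε - a) ⟪v, v'⟫`, and the log-Lipschitz bound gives `|a_ε'| ≤ C |log ε|`
and `|a_ε - a| ≤ C ε |log ε|`. Choosing `ε = 1 / (e β)` makes both terms at most
`C (1 + log β)` times `β² ‖v‖² + ‖v'‖²`, which is comparable to `E` because `a` is bounded
above and below. Grönwall's inequality then bounds the growth by
`exp (δ T (1 + log β)) = e^{δ T} β^{δ T}`.
-/

open Real Set intervalIntegral

namespace Real

lemma negMulLog_eq_mul_abs_log {x : ℝ} (hx0 : 0 ≤ x) (hx1 : x ≤ 1) :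
    negMulLog x = x * |log x| := by
  rw [abs_of_nonpos (log_nonpos hx0 hx1), negMulLog]
  ring

lemma negMulLog_le_negMulLog {x y : ℝ} (hx : 0 ≤ x) (hxy : x ≤ y) (hy : y ≤ exp (-1)) :
    negMulLog x ≤ negMulLog y := by
  simp only [negMulLog_eq_neg, neg_le_neg_iff]
  exact mul_log_strictAntiOn.antitoneOn ⟨hx, hxy.trans hy⟩ ⟨hx.trans hxy, hy⟩ hxy

end Real

/-- The modulus `negMulLog` is increasing only on `[0, e⁻¹]`, hence the restriction on `|x - y|`. -/
def LogLipschitzWith (C : ℝ) (f : ℝ → ℝ) : Prop :=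
  ∀ x y, |x - y| ≤ exp (-1) → |f x - f y| ≤ C * negMulLog |x - y|

lemma logLipschitzWith_comp_projIcc {a : ℝ → ℝ} {C T : ℝ} (hT : 0 ≤ T) (hC : 0 ≤ C)
    (ha : ∀ t ∈ Icc (0 : ℝ) T, ∀ s ∈ Icc (0 : ℝ) T, t ≠ s →
      |a t - a s| ≤ C * |t - s| * |log (|t - s|)|) :
    LogLipschitzWith C (fun t ↦ a (projIcc 0 T hT t)) := by
  intro x y hxy
  dsimp only
  have he1 : exp (-1) ≤ 1 := by simp
  set p := fun t ↦ (projIcc 0 T hT t : ℝ)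
  have hp : |p x - p y| ≤ |x - y| := abs_projIcc_sub_projIcc hT
  rcases eq_or_ne (p x) (p y) with hpxy | hpxy
  · rw [show (projIcc 0 T hT x : ℝ) = projIcc 0 T hT y from hpxy, sub_self, abs_zero]
    exact mul_nonneg hC (negMulLog_nonneg (abs_nonneg _) (hxy.trans he1))
  · calc |a (p x) - a (p y)| ≤ C * |p x - p y| * |log (|p x - p y|)| :=
          ha _ (projIcc 0 T hT x).2 _ (projIcc 0 T hT y).2 hpxy
      _ = C * negMulLog |p x - p y| := by
          rw [negMulLog_eq_mul_abs_log (abs_nonneg _) ((hp.trans hxy).trans he1)]; ring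
      _ ≤ C * negMulLog |x - y| :=
          mul_le_mul_of_nonneg_left (negMulLog_le_negMulLog (abs_nonneg _) hp hxy) hC

noncomputable def slidingAverage (f : ℝ → ℝ) (ε t : ℝ) : ℝ :=
  (∫ s in t..t + ε, f s) / ε

section slidingAverage

variable {f : ℝ → ℝ} {ε t : ℝ}

lemma hasDerivAt_slidingAverage (hf : Continuous f) (ε t : ℝ) :
    HasDerivAt (slidingAverage f ε) ((f (t + ε) - f t) / ε) t := by
  have h : slidingAverage f ε =
      fun t ↦ ((∫ s in (0 : ℝ)..t + ε, f s) - ∫ s in (0 : ℝ)..t, f s) / ε := by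
    ext t
    rw [slidingAverage,
      integral_interval_sub_left (hf.intervalIntegrable _ _) (hf.intervalIntegrable _ _)]
  rw [h]
  exact ((((hf.integral_hasStrictDerivAt 0 (t + ε)).hasDerivAt.comp_add_const t ε)).sub
    (hf.integral_hasStrictDerivAt 0 t).hasDerivAt).div_const ε

lemma slidingAverage_le {M : ℝ} (hf : Continuous f) (hε : 0 < ε)
    (h : ∀ s ∈ Icc t (t + ε), f s ≤ M) : slidingAverage f ε t ≤ M := by
  rw [slidingAverage, div_le_iff₀ hε]
  calc ∫ s in t..t + ε, f s ≤ ∫ _ in t..t + ε, M :=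
        integral_mono_on (by linarith) (hf.intervalIntegrable _ _) intervalIntegrable_const h
    _ = M * ε := by simp [mul_comm]

lemma le_slidingAverage {m : ℝ} (hf : Continuous f) (hε : 0 < ε)
    (h : ∀ s ∈ Icc t (t + ε), m ≤ f s) : m ≤ slidingAverage f ε t := by
  rw [slidingAverage, le_div_iff₀ hε]
  calc m * ε = ∫ _ in t..t + ε, m := by simp [mul_comm]
    _ ≤ ∫ s in t..t + ε, f s :=
        integral_mono_on (by linarith) intervalIntegrable_const (hf.intervalIntegrable _ _) h

lemma abs_slidingAverage_sub_le {b c : ℝ} (hf : Continuous f) (hε : 0 < ε)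
    (h : ∀ s ∈ Icc t (t + ε), |f s - b| ≤ c) : |slidingAverage f ε t - b| ≤ c := by
  rw [abs_sub_le_iff]
  constructor
  · linarith [slidingAverage_le hf hε (M := b + c) fun s hs ↦ by linarith [(abs_le.1 (h s hs)).2]]
  · linarith [le_slidingAverage hf hε (m := b - c) fun s hs ↦ by linarith [(abs_le.1 (h s hs)).1]]

end slidingAverage

namespace LogLipschitzWith

variable {C ε : ℝ} {f : ℝ → ℝ}

lemma abs_slidingAverage_sub_le (hf : LogLipschitzWith C f) (hC : 0 ≤ C) (hcont : Continuous f)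
    (hε : 0 < ε) (hε1 : ε ≤ exp (-1)) (t : ℝ) :
    |slidingAverage f ε t - f t| ≤ C * negMulLog ε := by
  refine _root_.abs_slidingAverage_sub_le hcont hε fun s hs ↦ ?_
  have hst : |s - t| ≤ ε := by rw [abs_of_nonneg (by linarith [hs.1])]; linarith [hs.2]
  exact (hf s t (hst.trans hε1)).trans
    (mul_le_mul_of_nonneg_left (negMulLog_le_negMulLog (abs_nonneg _) hst hε1) hC)

lemma abs_sub_div_le (hf : LogLipschitzWith C f) (hε : 0 < ε) (hε1 : ε ≤ exp (-1)) (t : ℝ) :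
    |(f (t + ε) - f t) / ε| ≤ C * -log ε := by
  rw [abs_div, abs_of_pos hε, div_le_iff₀ hε]
  have h := hf (t + ε) t (by rwa [add_sub_cancel_left, abs_of_pos hε])
  rw [add_sub_cancel_left, abs_of_pos hε, negMulLog] at h
  linarith

end LogLipschitzWith

lemma le_mul_exp_of_hasDerivAt_le {f f' : ℝ → ℝ} {γ a b : ℝ}
    (hf : ∀ t ∈ Icc a b, HasDerivAt f (f' t) t) (hbound : ∀ t ∈ Ico a b, f' t ≤ γ * f t) :
    ∀ t ∈ Icc a b, f t ≤ f a * exp (γ * (t - a)) := by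
  intro t ht
  have h := le_gronwallBound_of_liminf_deriv_right_le (f := f) (f' := f') (δ := f a) (K := γ)
    (ε := 0) (fun x hx ↦ (hf x hx).continuousAt.continuousWithinAt)
    (fun x hx _ hr ↦ (hf x (Ico_subset_Icc_self hx)).hasDerivWithinAt.liminf_right_slope_le hr)
    le_rfl (fun x hx ↦ by rw [add_zero]; exact hbound x hx) t ht
  rwa [gronwallBound_ε0] at h

section Energy

variable {F : Type*} [NormedAddCommGroup F]

def approxEnergy (α : ℝ → ℝ) (β : ℝ) (v v' : ℝ → F) (t : ℝ) : ℝ :=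
  α t * β ^ 2 * ‖v t‖ ^ 2 + ‖v' t‖ ^ 2

variable {a α : ℝ → ℝ} {v v' v'' : ℝ → F} {β m M t : ℝ}

lemma mul_energy_le_approxEnergy (hm1 : m ≤ 1) (hmα : m ≤ α t) :
    m * (β ^ 2 * ‖v t‖ ^ 2 + ‖v' t‖ ^ 2) ≤ approxEnergy α β v v' t := by
  unfold approxEnergy
  nlinarith [mul_le_mul_of_nonneg_right hmα (by positivity : 0 ≤ β ^ 2 * ‖v t‖ ^ 2),
    mul_le_mul_of_nonneg_right hm1 (by positivity : 0 ≤ ‖v' t‖ ^ 2)]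

lemma approxEnergy_le_mul_energy (hM1 : 1 ≤ M) (hαM : α t ≤ M) :
    approxEnergy α β v v' t ≤ M * (β ^ 2 * ‖v t‖ ^ 2 + ‖v' t‖ ^ 2) := by
  unfold approxEnergy
  nlinarith [mul_le_mul_of_nonneg_right hαM (by positivity : 0 ≤ β ^ 2 * ‖v t‖ ^ 2),
    mul_le_mul_of_nonneg_right hM1 (by positivity : 0 ≤ ‖v' t‖ ^ 2)]

variable [InnerProductSpace ℝ F]

lemma abs_two_mul_mul_inner_le (β : ℝ) (x y : F) :
    |2 * β * inner ℝ x y| ≤ β ^ 2 * ‖x‖ ^ 2 + ‖y‖ ^ 2 := by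
  have h := abs_real_inner_le_norm x y
  rw [abs_mul, abs_mul, abs_two]
  nlinarith [two_mul_le_add_sq (|β| * ‖x‖) ‖y‖, sq_abs β, abs_nonneg β,
    mul_le_mul_of_nonneg_left h (abs_nonneg β)]

lemma hasDerivAt_approxEnergy {α'' : ℝ} (hα : HasDerivAt α α'' t)
    (hv : HasDerivAt v (v' t) t) (hv' : HasDerivAt v' (v'' t) t)
    (hode : v'' t + (a t * β ^ 2) • v t = 0) :
    HasDerivAt (approxEnergy α β v v')
      (α'' * β ^ 2 * ‖v t‖ ^ 2 + 2 * β ^ 2 * (α t - a t) * inner ℝ (v t) (v' t)) t := by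
  have hv'' : v'' t = -((a t * β ^ 2) • v t) := eq_neg_of_add_eq_zero_left hode
  refine (((hα.mul_const (β ^ 2)).mul hv.norm_sq).add hv'.norm_sq).congr_deriv ?_
  rw [hv'', inner_neg_right, real_inner_smul_right, real_inner_comm (v t)]
  ring

lemma approxEnergy_deriv_le {α'' K η : ℝ} (hm : 0 < m) (hm1 : m ≤ 1) (hmα : m ≤ α t)
    (hβ : 0 ≤ β) (hα'' : |α''| ≤ K) (hαa : β * |α t - a t| ≤ η) :
    α'' * β ^ 2 * ‖v t‖ ^ 2 + 2 * β ^ 2 * (α t - a t) * inner ℝ (v t) (v' t) ≤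
      (K + η) / m * approxEnergy α β v v' t := by
  set X := β ^ 2 * ‖v t‖ ^ 2 + ‖v' t‖ ^ 2
  have hX : β ^ 2 * ‖v t‖ ^ 2 ≤ X := le_add_of_nonneg_right (by positivity)
  have h₁ : α'' * β ^ 2 * ‖v t‖ ^ 2 ≤ K * X := by
    rw [mul_assoc]
    calc α'' * (β ^ 2 * ‖v t‖ ^ 2) ≤ |α''| * X :=
          mul_le_mul (le_abs_self _) hX (by positivity) (abs_nonneg _)
      _ ≤ K * X := mul_le_mul_of_nonneg_right hα'' (hX.trans' (by positivity))
  have h₂ : 2 * β ^ 2 * (α t - a t) * inner ℝ (v t) (v' t) ≤ η * X := by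
    have hprod : 2 * β ^ 2 * (α t - a t) * inner ℝ (v t) (v' t) =
        (α t - a t) * (2 * β * inner ℝ (v t) (v' t)) * β := by ring
    calc _ ≤ |(α t - a t) * (2 * β * inner ℝ (v t) (v' t)) * β| := hprod ▸ le_abs_self _
      _ = β * |α t - a t| * |2 * β * inner ℝ (v t) (v' t)| := by
          rw [abs_mul, abs_mul, abs_of_nonneg hβ]; ring
      _ ≤ η * X := mul_le_mul hαa (abs_two_mul_mul_inner_le β _ _) (abs_nonneg _)
          ((mul_nonneg hβ (abs_nonneg _)).trans hαa)
  have hKη : 0 ≤ K + η :=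
    add_nonneg ((abs_nonneg _).trans hα'') ((mul_nonneg hβ (abs_nonneg _)).trans hαa)
  have hXE : X ≤ approxEnergy α β v v' t / m :=
    (le_div_iff₀' hm).2 (mul_energy_le_approxEnergy hm1 hmα)
  calc _ ≤ (K + η) * X := by linarith
    _ ≤ (K + η) * (approxEnergy α β v v' t / m) := mul_le_mul_of_nonneg_left hXE hKη
    _ = _ := by ring

theorem energy_le_of_approxEnergy {α' : ℝ → ℝ} {K η T : ℝ} (hm : 0 < m) (hm1 : m ≤ 1)
    (hM1 : 1 ≤ M) (hβ : 0 ≤ β) (hα : ∀ t ∈ Icc 0 T, HasDerivAt α (α' t) t)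
    (hmα : ∀ t ∈ Icc 0 T, m ≤ α t) (hαM : α 0 ≤ M) (hα' : ∀ t ∈ Icc 0 T, |α' t| ≤ K)
    (hαa : ∀ t ∈ Icc 0 T, β * |α t - a t| ≤ η)
    (hv : ∀ t ∈ Icc 0 T, HasDerivAt v (v' t) t) (hv' : ∀ t ∈ Icc 0 T, HasDerivAt v' (v'' t) t)
    (hode : ∀ t ∈ Icc 0 T, v'' t + (a t * β ^ 2) • v t = 0) (ht : t ∈ Icc 0 T) :
    β ^ 2 * ‖v t‖ ^ 2 + ‖v' t‖ ^ 2 ≤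
      M / m * exp ((K + η) / m * t) * (β ^ 2 * ‖v 0‖ ^ 2 + ‖v' 0‖ ^ 2) := by
  have hE := le_mul_exp_of_hasDerivAt_le
    (fun s hs ↦ hasDerivAt_approxEnergy (hα s hs) (hv s hs) (hv' s hs) (hode s hs))
    (fun s hs ↦ have hs := Ico_subset_Icc_self hs
      approxEnergy_deriv_le hm hm1 (hmα s hs) hβ (hα' s hs) (hαa s hs)) t ht
  rw [sub_zero] at hE
  calc β ^ 2 * ‖v t‖ ^ 2 + ‖v' t‖ ^ 2 ≤ approxEnergy α β v v' t / m :=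
        (le_div_iff₀' hm).2 (mul_energy_le_approxEnergy hm1 (hmα t ht))
    _ ≤ approxEnergy α β v v' 0 * exp ((K + η) / m * t) / m := by gcongr
    _ ≤ M * (β ^ 2 * ‖v 0‖ ^ 2 + ‖v' 0‖ ^ 2) * exp ((K + η) / m * t) / m := by
        gcongr; exact approxEnergy_le_mul_energy hM1 hαM
    _ = _ := by ring

end Energy

theorem LogLipschitzWith.energy_le {F : Type*} [NormedAddCommGroup F] [InnerProductSpace ℝ F]
    {f : ℝ → ℝ} {v v' v'' : ℝ → F} {C m M T β t : ℝ}
    (hf : LogLipschitzWith C f) (hcont : Continuous f) (hC : 0 ≤ C) (hm : 0 < m) (hm1 : m ≤ 1)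
    (hM1 : 1 ≤ M) (hmf : ∀ t, m ≤ f t) (hfM : ∀ t, f t ≤ M) (hβ : 1 ≤ β)
    (hv : ∀ t ∈ Icc 0 T, HasDerivAt v (v' t) t) (hv' : ∀ t ∈ Icc 0 T, HasDerivAt v' (v'' t) t)
    (hode : ∀ t ∈ Icc 0 T, v'' t + (f t * β ^ 2) • v t = 0) (ht : t ∈ Icc 0 T) :
    β ^ 2 * ‖v t‖ ^ 2 + ‖v' t‖ ^ 2 ≤
      M / m * exp (2 * C / m * T) * β ^ (2 * C / m * T) * (β ^ 2 * ‖v 0‖ ^ 2 + ‖v' 0‖ ^ 2) := by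
  have hβ0 : 0 < β := by linarith
  set ε := (exp 1 * β)⁻¹
  set L := 1 + log β
  have hε : 0 < ε := by positivity
  have hlogε : -log ε = L := by
    rw [log_inv, log_mul (exp_ne_zero 1) hβ0.ne', log_exp, neg_neg]
  have hL : 0 ≤ L := by linarith [log_nonneg hβ]
  have hβε : β * ε = exp (-1) := by
    simp only [ε]; rw [exp_neg]; field_simp
  have hε1 : ε ≤ exp (-1) := hβε ▸ le_mul_of_one_le_left hε.le hβ
  have hclose (s : ℝ) : β * |slidingAverage f ε s - f s| ≤ C * L := by
    calc β * |slidingAverage f ε s - f s| ≤ β * (C * negMulLog ε) :=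
          mul_le_mul_of_nonneg_left (hf.abs_slidingAverage_sub_le hC hcont hε hε1 s) hβ0.le
      _ = C * L * exp (-1) := by rw [negMulLog, ← hlogε, ← hβε]; ring
      _ ≤ C * L := mul_le_of_le_one_right (by positivity) (by simp)
  have hexp : exp ((C * L + C * L) / m * t) ≤ exp (2 * C / m * T) * β ^ (2 * C / m * T) := by
    rw [rpow_def_of_pos hβ0, ← exp_add, exp_le_exp]
    calc (C * L + C * L) / m * t = 2 * C / m * L * t := by ring
      _ ≤ 2 * C / m * L * T := by gcongr; exact ht.2
      _ = 2 * C / m * T + log β * (2 * C / m * T) := by ring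
  calc _ ≤ M / m * exp ((C * L + C * L) / m * t) * (β ^ 2 * ‖v 0‖ ^ 2 + ‖v' 0‖ ^ 2) :=
        energy_le_of_approxEnergy hm hm1 hM1 hβ0.le
          (fun s _ ↦ hasDerivAt_slidingAverage hcont ε s)
          (fun s _ ↦ le_slidingAverage hcont hε fun u _ ↦ hmf u)
          (slidingAverage_le hcont hε fun u _ ↦ hfM u)
          (fun s _ ↦ hlogε ▸ hf.abs_sub_div_le hε hε1 s) (fun s _ ↦ hclose s) hv hv' hode ht
    _ ≤ M / m * (exp (2 * C / m * T) * β ^ (2 * C / m * T)) *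
          (β ^ 2 * ‖v 0‖ ^ 2 + ‖v' 0‖ ^ 2) := by gcongr
    _ = _ := by ring

theorem stmt_9 (T C a₀ : ℝ) (hT : 0 < T) (hC : 0 < C) (ha₀ : 0 < a₀)
    (a : ℝ → ℝ) (hcont : ContinuousOn a (Set.Icc 0 T))
    (hlb : ∀ t ∈ Set.Icc (0:ℝ) T, a₀ ≤ a t)
    (hLL : ∀ t ∈ Set.Icc (0:ℝ) T, ∀ s ∈ Set.Icc (0:ℝ) T, t ≠ s →
      |a t - a s| ≤ C * |t - s| * |Real.log (|t - s|)|) :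
    ∃ M : ℝ, 0 < M ∧ ∃ δ : ℝ, 0 < δ ∧
      ∀ β : ℝ, 1 ≤ β → ∀ v v' v'' : ℝ → ℂ, ∀ v₀ v₁ : ℂ,
        (∀ t ∈ Set.Icc (0:ℝ) T, HasDerivAt v (v' t) t) →
        (∀ t ∈ Set.Icc (0:ℝ) T, HasDerivAt v' (v'' t) t) →
        (∀ t ∈ Set.Icc (0:ℝ) T, v'' t + (a t * β ^ 2 : ℝ) * v t = 0) →
        v 0 = v₀ → v' 0 = v₁ →
        ∀ t ∈ Set.Icc (0:ℝ) T,
          β ^ 2 * ‖v t‖ ^ 2 + ‖v' t‖ ^ 2 ≤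
            M ^ 2 * β ^ (δ * T) * (β ^ 2 * ‖v₀‖ ^ 2 + ‖v₁‖ ^ 2) := by
  obtain ⟨a₁, ha₁⟩ := isCompact_Icc.bddAbove_image hcont
  set A := fun t ↦ a (projIcc 0 T hT.le t)
  have hA : Continuous A :=
    hcont.comp_continuous (continuous_subtype_val.comp continuous_projIcc) fun t ↦ Subtype.prop _
  set m := min a₀ 1
  set M := max a₁ 1
  have hm : 0 < m := lt_min ha₀ one_pos
  refine ⟨√(M / m * exp (2 * C / m * T)), by positivity, 2 * C / m, by positivity, ?_⟩
  rintro β hβ v v' v'' _ _ hv hv' hode rfl rfl t ht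
  rw [sq_sqrt (by positivity)]
  refine (logLipschitzWith_comp_projIcc hT.le hC.le hLL).energy_le hA hC.le hm (min_le_right _ _)
    (le_max_right _ _) (fun s ↦ (min_le_left _ _).trans (hlb _ (projIcc 0 T hT.le s).2))
    (fun s ↦ (ha₁ (mem_image_of_mem a (projIcc 0 T hT.le s).2)).trans (le_max_left _ _)) hβ hv hv'
    (fun s hs ↦ ?_) ht
  rw [Complex.real_smul]
  simpa [A, projIcc_of_mem hT.le hs] using hode s hs
end
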